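/- Under the hypotheses of the A_k-chain configuration (vertices 1,…,k of a weighted graph on {1,…,n} over a field K form a chain: a_{i,i+1} = 1 for 1 ≤ i ≤ k−1, a_{ij} = 0 for other pairs i < j ≤ k, and a_{ij} = 0 for i ≤ k−1 < j), with C_i(q) the Coxeter polynomial of the induced subgraph on {i+1,…,n} (C₀ the whole graph), q ≠ 0 and z = q + q⁻¹, the following 2×2 matrix identity holds for all 1 ≤ i ≤ k−1: [[C_{i−1}(q), C_i(q)], [C_i(q), C_{i+1}(q)]] = [[0, 1], [−1, z]]^{i−1} · [[C₀(q), C₁(q)], [C₁(q), C₂(q)]]. -/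

import Mathlib

/-! At a chain vertex `m` whose only later neighbour is `m + 1`, joined with weight `1`, the first
row and column of the Coxeter matrix on `{m, …, n-1}` are `(q + q⁻¹, -q, 0, …)` and
`(q + q⁻¹, -q⁻¹, 0, …)`. Expanding the determinant along them gives
`C_m = z C_{m+1} - C_{m+2}`, so left multiplication by `[[0, 1], [-1, z]]` shifts the window
`[[C_m, C_{m+1}], [C_{m+1}, C_{m+2}]]` by one. -/

open Matrix Finset

/-- The Seifert matrix of a weighted graph on `Fin n` with symmetric weights `a`. -/
def chainSeifert {K : Type*} [Field K] {n : ℕ} (a : Fin n → Fin n → K) :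
    Matrix (Fin n) (Fin n) K :=
  Matrix.of fun i j => if i = j then (1 : K) else if i < j then -a i j else 0

/-- `coxMatrix a t = t • S + t⁻¹ • Sᵀ`, whose determinant is the Coxeter polynomial. -/
def coxMatrix {K : Type*} [Field K] {n : ℕ} (a : Fin n → Fin n → K) (t : K) :
    Matrix (Fin n) (Fin n) K :=
  t • chainSeifert a + t⁻¹ • (chainSeifert a)ᵀ

/-- `chainC a t i` is the Coxeter polynomial of the induced subgraph on the vertices
`{i, i+1, …, n-1}` of `Fin n` (i.e. vertices `{i+1, …, n}` in 1-based numbering);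
for `i = 0` it is the Coxeter polynomial of the whole graph. -/
def chainC {K : Type*} [Field K] {n : ℕ} (a : Fin n → Fin n → K) (t : K) (i : ℕ) : K :=
  ((coxMatrix a t).submatrix
    (fun x : Fin (n - i) => (⟨i + x.val, by have := x.isLt; omega⟩ : Fin n))
    (fun x : Fin (n - i) => (⟨i + x.val, by have := x.isLt; omega⟩ : Fin n))).det

theorem Matrix.det_eq_sub_of_first_row_col_vanish {R : Type*} [CommRing R] {s : ℕ}
    (M : Matrix (Fin (s + 2)) (Fin (s + 2)) R)
    (hrow : ∀ j : Fin s, M 0 j.succ.succ = 0) (hcol : ∀ i : Fin s, M i.succ.succ 0 = 0) :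
    M.det = M 0 0 * (M.submatrix Fin.succ Fin.succ).det
      - M 0 1 * M 1 0 * (M.submatrix (Fin.succ ∘ Fin.succ) (Fin.succ ∘ Fin.succ)).det := by
  have hminor : (M.submatrix Fin.succ (Fin.succAbove 1)).det
      = M 1 0 * (M.submatrix (Fin.succ ∘ Fin.succ) (Fin.succ ∘ Fin.succ)).det := by
    rw [det_succ_column_zero, Fin.sum_univ_succ]
    simp [hcol, Fin.succAbove_zero, Function.comp_def]
  rw [det_succ_row_zero, Fin.sum_univ_succ, Fin.sum_univ_succ]
  simp [hrow, hminor, Fin.succAbove_zero, sub_eq_add_neg, mul_assoc]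

def tailMatrix {R : Type*} {n : ℕ} (A : Matrix (Fin n) (Fin n) R) (i s : ℕ) (h : i + s ≤ n) :
    Matrix (Fin s) (Fin s) R :=
  A.submatrix (fun x => ⟨i + x, by have := x.isLt; omega⟩)
    (fun x => ⟨i + x, by have := x.isLt; omega⟩)

section tailMatrix

variable {R : Type*} {n : ℕ}

theorem tailMatrix_submatrix_succ (A : Matrix (Fin n) (Fin n) R) (i s : ℕ)
    (h : i + (s + 1) ≤ n) :
    (tailMatrix A i (s + 1) h).submatrix Fin.succ Fin.succ
      = tailMatrix A (i + 1) s (by omega) := by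
  ext x y
  simp only [tailMatrix, submatrix_apply, Fin.val_succ]
  congr 1 <;> ext <;> simp only <;> omega

theorem det_tailMatrix_eq_sub [CommRing R] (A : Matrix (Fin n) (Fin n) R) {i s : ℕ}
    (h : i + (s + 2) ≤ n)
    (hvanish : ∀ j : Fin n, i + 2 ≤ j → A ⟨i, by omega⟩ j = 0 ∧ A j ⟨i, by omega⟩ = 0) :
    (tailMatrix A i (s + 2) h).det
      = A ⟨i, by omega⟩ ⟨i, by omega⟩ * (tailMatrix A (i + 1) (s + 1) (by omega)).det
        - A ⟨i, by omega⟩ ⟨i + 1, by omega⟩ * A ⟨i + 1, by omega⟩ ⟨i, by omega⟩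
          * (tailMatrix A (i + 2) s (by omega)).det := by
  have hsub₂ : (tailMatrix A i (s + 2) h).submatrix (Fin.succ ∘ Fin.succ) (Fin.succ ∘ Fin.succ)
      = tailMatrix A (i + 2) s (by omega) := by
    rw [← submatrix_submatrix, tailMatrix_submatrix_succ, tailMatrix_submatrix_succ]
  rw [det_eq_sub_of_first_row_col_vanish, tailMatrix_submatrix_succ, hsub₂]
  · rfl
  · intro j
    exact (hvanish _ (by simp)).1
  · intro j
    exact (hvanish _ (by simp)).2

end tailMatrix

section coxMatrix

variable {K : Type*} [Field K] {n : ℕ} (a : Fin n → Fin n → K) (t : K)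

theorem coxMatrix_apply_self (i : Fin n) : coxMatrix a t i i = t + t⁻¹ := by
  simp [coxMatrix, chainSeifert]

theorem coxMatrix_apply_of_lt {i j : Fin n} (h : i < j) : coxMatrix a t i j = -(t * a i j) := by
  simp [coxMatrix, chainSeifert, h.ne, h.ne', h, h.not_gt]

theorem coxMatrix_apply_of_gt {i j : Fin n} (h : j < i) : coxMatrix a t i j = -(t⁻¹ * a j i) := by
  simp [coxMatrix, chainSeifert, h.ne, h.ne', h, h.not_gt]

theorem chainC_eq_det_tailMatrix (i s : ℕ) (h : n - i = s) (hs : i + s ≤ n) :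
    chainC a t i = (tailMatrix (coxMatrix a t) i s hs).det := by
  subst h
  rfl

end coxMatrix

theorem chainC_eq_sub {K : Type*} [Field K] {n : ℕ} {a : Fin n → Fin n → K} {t : K}
    (ht : t ≠ 0) {m : ℕ} (hm : m + 2 ≤ n) (hnext : a ⟨m, by omega⟩ ⟨m + 1, by omega⟩ = 1)
    (hfar : ∀ j : Fin n, m + 2 ≤ j → a ⟨m, by omega⟩ j = 0) :
    chainC a t m = (t + t⁻¹) * chainC a t (m + 1) - chainC a t (m + 2) := by
  obtain ⟨s, hs⟩ : ∃ s, n - m = s + 2 := ⟨n - m - 2, by omega⟩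
  rw [chainC_eq_det_tailMatrix a t m (s + 2) hs (by omega),
    chainC_eq_det_tailMatrix a t (m + 1) (s + 1) (by omega) (by omega),
    chainC_eq_det_tailMatrix a t (m + 2) s (by omega) (by omega), det_tailMatrix_eq_sub]
  · rw [coxMatrix_apply_self, coxMatrix_apply_of_lt _ _ (by simp [Fin.lt_def]),
      coxMatrix_apply_of_gt _ _ (by simp [Fin.lt_def]), hnext]
    field_simp
  · intro j hj
    have hmj : (⟨m, by omega⟩ : Fin n) < j := by show m < j.val; omega
    rw [coxMatrix_apply_of_lt _ _ hmj, coxMatrix_apply_of_gt _ _ hmj, hfar j hj]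
    simp

theorem window_eq_transfer_pow_mul {R : Type*} [CommRing R] (C : ℕ → R) (z : R) {k : ℕ}
    (hrec : ∀ m, m + 1 < k → C m = z * C (m + 1) - C (m + 2)) :
    ∀ j, j + 1 < k → !![C j, C (j + 1); C (j + 1), C (j + 2)]
      = !![0, 1; -1, z] ^ j * !![C 0, C 1; C 1, C 2]
  | 0, _ => by simp
  | j + 1, hj => by
    rw [pow_succ', mul_assoc, ← window_eq_transfer_pow_mul C z hrec j (by omega)]
    ext x y
    fin_cases x <;> fin_cases y
    · simp
    · simp
    · simp [hrec j (by omega)]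
    · simp [hrec (j + 1) hj]

/-- The transfer-matrix identity of Example 2: under the `A_k`-chain hypotheses,
`[[C_{i-1}, C_i], [C_i, C_{i+1}]] = [[0,1],[-1,z]]^(i-1) · [[C₀, C₁], [C₁, C₂]]`
for `1 ≤ i ≤ k - 1`, where `z = q + q⁻¹`. -/
theorem chain_transfer_matrix {K : Type*} [Field K] (n k : ℕ)
    (a : Fin n → Fin n → K)
    (q : K) (hq : q ≠ 0)
    (hkn : k ≤ n)
    (hchain : ∀ i : ℕ, (h : i + 1 < k) →
      a ⟨i, by omega⟩ ⟨i + 1, by omega⟩ = 1)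
    (hzero : ∀ i j : ℕ, (hi : i < k) → (hj : j < k) → i < j → j ≠ i + 1 →
      a ⟨i, by omega⟩ ⟨j, by omega⟩ = 0)
    (hcut : ∀ i j : ℕ, (hi : i + 1 < k) → (hj : k ≤ j) → (hjn : j < n) →
      a ⟨i, by omega⟩ ⟨j, by omega⟩ = 0) :
    ∀ i : ℕ, 1 ≤ i → i < k →
      !![chainC a q (i - 1), chainC a q i; chainC a q i, chainC a q (i + 1)]
        = !![(0 : K), 1; -1, q + q⁻¹] ^ (i - 1) *
            !![chainC a q 0, chainC a q 1; chainC a q 1, chainC a q 2] := by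
  have hrec : ∀ m, m + 1 < k →
      chainC a q m = (q + q⁻¹) * chainC a q (m + 1) - chainC a q (m + 2) := by
    intro m hm
    refine chainC_eq_sub hq (by omega) (hchain m hm) fun j hj => ?_
    rcases lt_or_ge j.val k with hjk | hjk
    · exact hzero m j (by omega) hjk (by omega) (by omega)
    · exact hcut m j hm hjk j.isLt
  intro i hi hik
  obtain ⟨j, rfl⟩ : ∃ j, i = j + 1 := ⟨i - 1, by omega⟩
  simpa using window_eq_transfer_pow_mul (chainC a q) (q + q⁻¹) hrec j hik
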